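/- Let M be a finite abelian group whose order is odd, and b : M × M → e* a nondegenerate symmetric bilinear form with values in the roots of unity of an algebraically closed field e of characteristic 0. Define the Gauss sum G(M,b) = Σ_{m∈M} b(m,m) ∈ e. Then G(M,b)⁴ = |M|². -/

import Mathlib

/-!
Write `G = ∑ b(m,m)` and `G'` for the Gauss sum of `b⁻¹`. Substituting `m = n + t` gives
`G G' = ∑_t b(t,t) ∑_n b(t,n)²`; the inner sum is the sum of the character `n ↦ b(t, 2n)`,
which vanishes for `t ≠ 0` since doubling is a bijection of a group of odd order and `b` is
nondegenerate. Hence `G G' = |M|`.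

As `|M|` is odd, `-1 ≡ a² + c² (mod |M|)` (Hensel lifting from primes, then the Chinese
remainder theorem), so `(m, n) ↦ (a m + c n, c m - a n)` squares to `-1` on `M × M` and turns
`b(m,m) b(n,n)` into its inverse. Therefore `G² = G'²` and `G⁴ = (G G')² = |M|²`.
-/

/-- A map `b : M × M → eˣ` is bilinear (multiplicatively valued). -/
def IsMulBilin {M : Type*} [AddCommGroup M] {e : Type*} [Field e]
    (b : M → M → eˣ) : Prop :=
  (∀ m₁ m₂ l, b (m₁ + m₂) l = b m₁ l * b m₂ l) ∧
  (∀ m l₁ l₂, b m (l₁ + l₂) = b m l₁ * b m l₂)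

theorem Int.exists_pow_add_two_dvd_sq_add {p : ℤ} (hp : Prime p) (hp2 : ¬p ∣ 2) {k : ℕ}
    {a d : ℤ} (ha : ¬p ∣ a) (h : p ^ (k + 1) ∣ a ^ 2 + d) :
    ∃ a', p ^ (k + 2) ∣ a' ^ 2 + d := by
  obtain ⟨u, hu⟩ := h
  -- Newton step `a' = a - u s p^(k+1)`, where `s` inverts `2a` modulo `p`.
  obtain ⟨s, q, hsq⟩ : IsCoprime (2 * a) p :=
    ((Prime.coprime_iff_not_dvd hp).2 fun h => (hp.dvd_or_dvd h).elim hp2 ha).symm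
  exact ⟨a - u * s * p ^ (k + 1), u * q + u ^ 2 * s ^ 2 * p ^ k,
    by linear_combination hu - p ^ (k + 1) * u * hsq⟩

theorem Int.exists_prime_pow_dvd_sq_add_sq_add_one {p : ℕ} (hp : p.Prime) (hodd : Odd p)
    (k : ℕ) :
    ∃ a c : ℤ, (p : ℤ) ^ (k + 1) ∣ a ^ 2 + c ^ 2 + 1 := by
  have hp' : Prime (p : ℤ) := Nat.prime_iff_prime_int.1 hp
  have hp2 : ¬(p : ℤ) ∣ 2 := fun h => by
    obtain rfl := (Nat.prime_dvd_prime_iff_eq hp Nat.prime_two).1 (Int.natCast_dvd_ofNat.1 h)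
    exact absurd hodd (by decide)
  induction k with
  | zero =>
    have := Fact.mk hp
    obtain ⟨a, c, -, -, h⟩ := Nat.sq_add_sq_zmodEq p (-1)
    exact ⟨a, c, by simpa using h.symm.dvd⟩
  | succ k ih =>
    obtain ⟨a, c, h⟩ := ih
    by_cases ha : (p : ℤ) ∣ a
    · have hc : ¬(p : ℤ) ∣ c := fun hc => hp'.not_dvd_one <| by
        simpa using ((dvd_pow_self _ k.succ_ne_zero).trans h).sub
          ((dvd_pow ha two_ne_zero).add (dvd_pow hc two_ne_zero))
      obtain ⟨c', hc'⟩ := Int.exists_pow_add_two_dvd_sq_add hp' hp2 hc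
        (d := a ^ 2 + 1) (by convert h using 1; ring)
      exact ⟨a, c', by convert hc' using 1; ring⟩
    · obtain ⟨a', ha'⟩ := Int.exists_pow_add_two_dvd_sq_add hp' hp2 ha
        (d := c ^ 2 + 1) (by convert h using 1; ring)
      exact ⟨a', c, by convert ha' using 1; ring⟩

theorem ZMod.exists_sq_add_sq_eq_neg_one {N : ℕ} (hN : Odd N) :
    ∃ x y : ZMod N, x ^ 2 + y ^ 2 = -1 := by
  induction N using Nat.recOnPosPrimePosCoprime with
  | zero => exact absurd hN (by decide)
  | one => exact ⟨0, 0, Subsingleton.elim _ _⟩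
  | prime_pow p n hp hn =>
    obtain ⟨k, rfl⟩ := Nat.exists_eq_succ_of_ne_zero hn.ne'
    obtain ⟨a, c, h⟩ := Int.exists_prime_pow_dvd_sq_add_sq_add_one hp
      (hN.of_dvd_nat (dvd_pow_self p hn.ne')) k
    refine ⟨a, c, eq_neg_of_add_eq_zero_left ?_⟩
    exact_mod_cast (ZMod.intCast_zmod_eq_zero_iff_dvd _ _).2 (by exact_mod_cast h)
  | coprime m n _ _ hmn ihm ihn =>
    obtain ⟨x₁, y₁, h₁⟩ := ihm (Nat.odd_mul.1 hN).1
    obtain ⟨x₂, y₂, h₂⟩ := ihn (Nat.odd_mul.1 hN).2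
    let χ := ZMod.chineseRemainder hmn
    refine ⟨χ.symm (x₁, x₂), χ.symm (y₁, y₂), χ.injective ?_⟩
    simp only [map_add, map_pow, RingEquiv.map_neg_one, RingEquiv.apply_symm_apply, Prod.pow_mk,
      Prod.mk_add_mk, h₁, h₂]
    rfl

def quadraticGaussSum {M : Type*} [Fintype M] {e : Type*} [Semiring e] (b : M → M → eˣ) : e :=
  ∑ m, (b m m : e)

theorem zsmul_eq_zsmul_of_intCast_eq {G : Type*} [AddGroup G] {k l : ℤ}
    (h : (k : ZMod (Nat.card G)) = l) (g : G) : k • g = l • g := by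
  rw [← mod_natCard_zsmul, ← mod_natCard_zsmul g l, (ZMod.intCast_eq_intCast_iff' _ _ _).1 h]

namespace IsMulBilin

variable {M : Type*} [AddCommGroup M] {e : Type*} [Field e] {b : M → M → eˣ}

theorem map_zsmul_left (hb : IsMulBilin b) (z : ℤ) (m l : M) : b (z • m) l = b m l ^ z :=
  map_zsmul (AddMonoidHom.mk' (fun m ↦ Additive.ofMul (b m l)) (hb.1 · · l)) z m

theorem map_zsmul_right (hb : IsMulBilin b) (z : ℤ) (m l : M) : b m (z • l) = b m l ^ z :=
  map_zsmul (AddMonoidHom.mk' (fun l ↦ Additive.ofMul (b m l)) (hb.2 m)) z l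

theorem map_zero_left (hb : IsMulBilin b) (l : M) : b 0 l = 1 := by
  simpa using hb.map_zsmul_left 0 0 l

theorem map_zero_right (hb : IsMulBilin b) (m : M) : b m 0 = 1 := by
  simpa using hb.map_zsmul_right 0 m 0

theorem map_neg_left (hb : IsMulBilin b) (m l : M) : b (-m) l = (b m l)⁻¹ := by
  simpa using hb.map_zsmul_left (-1) m l

theorem apply_zsmul_add_zsmul (hb : IsMulBilin b) (a c : ℤ) (m n : M) :
    b (a • m + c • n) (a • m + c • n) =
      b m m ^ (a * a) * b m n ^ (a * c) * b n m ^ (c * a) * b n n ^ (c * c) := by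
  simp only [hb.1, hb.2, hb.map_zsmul_left, hb.map_zsmul_right, ← zpow_mul]
  ac_rfl

variable [Fintype M]

theorem sum_apply_eq_zero (hb : IsMulBilin b) {t : M} (ht : ∃ n, b t n ≠ 1) :
    ∑ n, (b t n : e) = 0 := by
  let ψ : AddChar M e :=
    { toFun n := b t n
      map_zero_eq_one' := by simp [hb.map_zero_right]
      map_add_eq_mul' n₁ n₂ := by simp [hb.2] }
  refine AddChar.sum_eq_zero_of_ne_one (ψ := ψ) (AddChar.ne_one_iff.2 ?_)
  obtain ⟨n, hn⟩ := ht
  exact ⟨n, fun h => hn (Units.ext h)⟩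

theorem sum_apply_sq_eq_zero (hb : IsMulBilin b) (hnd : ∀ m : M, (∀ l : M, b m l = 1) → m = 0)
    (hodd : Odd (Fintype.card M)) {t : M} (ht : t ≠ 0) : ∑ n, (b t n : e) ^ 2 = 0 := by
  have hdouble : Function.Bijective (fun n : M => 2 • n) :=
    Nat.Coprime.nsmul_right_bijective
      (Nat.card_eq_fintype_card (α := M) ▸ hodd.coprime_two_right)
  calc ∑ n, (b t n : e) ^ 2 = ∑ n, (b t (2 • n) : e) := by simp [two_nsmul, hb.2, sq]
    _ = ∑ n, (b t n : e) := Fintype.sum_bijective _ hdouble _ _ fun _ => rfl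
    _ = 0 := hb.sum_apply_eq_zero (by by_contra! h; exact ht (hnd t h))

theorem quadraticGaussSum_mul_quadraticGaussSum_inv (hb : IsMulBilin b)
    (hsymm : ∀ m m' : M, b m m' = b m' m) (hnd : ∀ m : M, (∀ l : M, b m l = 1) → m = 0)
    (hodd : Odd (Fintype.card M)) :
    quadraticGaussSum b * quadraticGaussSum b⁻¹ = Fintype.card M := by
  have hshift (n t : M) :
      (b (n + t) (n + t) : e) * ((b n n)⁻¹ : eˣ) = b t t * (b t n : e) ^ 2 := by
    rw [← Units.val_pow_eq_pow_val, ← Units.val_mul, ← Units.val_mul, hb.1, hb.2, hb.2,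
      hsymm n t]
    congr 1
    rw [mul_inv_eq_iff_eq_mul, sq]
    ac_rfl
  calc quadraticGaussSum b * quadraticGaussSum b⁻¹
      = ∑ n, ∑ t, (b (n + t) (n + t) : e) * ((b n n)⁻¹ : eˣ) := by
        simp only [quadraticGaussSum, Finset.sum_mul_sum, Pi.inv_apply]
        rw [Finset.sum_comm]
        exact Finset.sum_congr rfl fun n _ =>
          (Fintype.sum_equiv (Equiv.addLeft n) _ _ fun _ => rfl).symm
    _ = ∑ t, (b t t : e) * ∑ n, (b t n : e) ^ 2 := by
        simp only [hshift, Finset.mul_sum]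
        exact Finset.sum_comm
    _ = Fintype.card M := by
        rw [Finset.sum_eq_single 0
          (fun t _ ht => by rw [hb.sum_apply_sq_eq_zero hnd hodd ht, mul_zero]) (by simp)]
        simp [hb.map_zero_left]

theorem quadraticGaussSum_sq_eq_quadraticGaussSum_inv_sq (hb : IsMulBilin b) (a c : ℤ)
    (hac : ∀ m : M, (a ^ 2 + c ^ 2) • m = -m) :
    quadraticGaussSum b ^ 2 = quadraticGaussSum b⁻¹ ^ 2 := by
  let Φ : M × M → M × M := fun p => (a • p.1 + c • p.2, c • p.1 + (-a) • p.2)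
  have hΦΦ (p : M × M) : Φ (Φ p) = -p := by
    ext
    · rw [Prod.fst_neg, ← hac]; simp only [Φ]; module
    · rw [Prod.snd_neg, ← hac]; simp only [Φ]; module
  have hΦ : Function.Bijective Φ :=
    Finite.injective_iff_bijective.1 fun p q h => neg_injective (by rw [← hΦΦ, ← hΦΦ, h])
  have hpow (m : M) : b m m ^ (a ^ 2 + c ^ 2) = (b m m)⁻¹ := by
    rw [← hb.map_zsmul_left, hac, hb.map_neg_left]
  have hpair (m n : M) : b (Φ (m, n)).1 (Φ (m, n)).1 * b (Φ (m, n)).2 (Φ (m, n)).2 =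
      (b m m)⁻¹ * (b n n)⁻¹ := by
    rw [hb.apply_zsmul_add_zsmul, hb.apply_zsmul_add_zsmul, ← hpow, ← hpow]
    refine Additive.ofMul.injective ?_
    simp only [ofMul_mul, ofMul_zpow]
    module
  simp only [quadraticGaussSum, sq, Finset.sum_mul_sum, ← Fintype.sum_prod_type', Pi.inv_apply]
  refine (Fintype.sum_bijective Φ hΦ _ _ fun p => ?_).symm
  simp only [← Units.val_mul, hpair]

end IsMulBilin

theorem gauss_sum_fourth_power_general
    {M : Type*} [AddCommGroup M] [Fintype M]
    {e : Type*} [Field e]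
    (hodd : Odd (Fintype.card M))
    (b : M → M → eˣ)
    (hbil : IsMulBilin b)
    (hsymm : ∀ m m' : M, b m m' = b m' m)
    (hnd : ∀ m : M, (∀ l : M, b m l = 1) → m = 0) :
    (∑ m : M, (b m m : e)) ^ 4 = (Fintype.card M : e) ^ 2 := by
  obtain ⟨x, y, hxy⟩ :=
    ZMod.exists_sq_add_sq_eq_neg_one (Nat.card_eq_fintype_card (α := M) ▸ hodd)
  have hac (m : M) : ((x.cast : ℤ) ^ 2 + (y.cast : ℤ) ^ 2) • m = -m := by
    rw [← neg_one_zsmul]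
    exact zsmul_eq_zsmul_of_intCast_eq (by push_cast [ZMod.intCast_zmod_cast]; exact hxy) m
  have hsq := hbil.quadraticGaussSum_sq_eq_quadraticGaussSum_inv_sq _ _ hac
  have hprod := hbil.quadraticGaussSum_mul_quadraticGaussSum_inv hsymm hnd hodd
  calc (∑ m : M, (b m m : e)) ^ 4 = quadraticGaussSum b ^ 2 * quadraticGaussSum b⁻¹ ^ 2 := by
        rw [← hsq, quadraticGaussSum]; ring
    _ = (Fintype.card M : e) ^ 2 := by rw [← mul_pow, hprod]

/-- Let `M` be a finite abelian group of odd order and `b : M × M → e*` a nondegenerate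
symmetric bilinear form valued in the roots of unity of an algebraically closed field `e`
of characteristic 0. Then the Gauss sum `G(M,b) = Σ_m b(m,m)` satisfies `G(M,b)⁴ = |M|²`. -/
theorem gauss_sum_fourth_power
    {M : Type*} [AddCommGroup M] [Fintype M]
    {e : Type*} [Field e] [IsAlgClosed e] [CharZero e]
    (hodd : Odd (Fintype.card M))
    (b : M → M → eˣ)
    (hbil : IsMulBilin b)
    (hsymm : ∀ m m' : M, b m m' = b m' m)
    (hnd : ∀ m : M, (∀ l : M, b m l = 1) → m = 0)
    (hroot : ∀ m m' : M, ∃ k : ℕ, 0 < k ∧ b m m' ^ k = 1) :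
    (∑ m : M, (b m m : e)) ^ 4 = (Fintype.card M : e) ^ 2 :=
  gauss_sum_fourth_power_general hodd b hbil hsymm hnd
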